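/- Let (k,k̂), (ℓ,ℓ̂) ∈ (L \ 𝔽_q)² and suppose k̂ = k^[n] for some n ∈ {1,2}. Then (Σ₁(k,k̂), Σ₂(k,k̂)) = (Σ₁(ℓ,ℓ̂), Σ₂(ℓ,ℓ̂)) if and only if there exists r ∈ {0,1,2} such that (ℓ, ℓ̂) = (k^[r], k^[n+r]) or (ℓ, ℓ̂) = (k^[n+r], k^[r]) (exponents of the Frobenius taken modulo 3). -/

import Mathlib

open Matrix Polynomial

/-- A `[3×3;3]`-MRD code: a 3-dimensional `F`-subspace of the `3×3` matrices over `F`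
in which every nonzero matrix is invertible. -/
def IsMRD (F : Type*) [Field F] [Fintype F]
    (Cc : Submodule F (Matrix (Fin 3) (Fin 3) F)) : Prop :=
  Module.finrank F Cc = 3 ∧ ∀ M ∈ Cc, M ≠ 0 → IsUnit M

/-- The companion matrix `C_f` of `f = x³ - c·x² - b·x - a`, with rows
`(0,0,a)`, `(1,0,b)`, `(0,1,c)`. -/
def cMat (F : Type*) [Field F] (a b c : F) : Matrix (Fin 3) (Fin 3) F :=
  !![0, 0, a; 1, 0, b; 0, 1, c]

/-- The monic cubic `x³ - c·x² - b·x - a`. -/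
noncomputable def cubic (F : Type*) [Field F] (a b c : F) : Polynomial F :=
  X ^ 3 - C c * X ^ 2 - C b * X - C a

/-- The set `𝒮` of triples `(I, C_f, Z)` with `f` a monic irreducible cubic,
`Z` having first column `(0,0,1)ᵀ`, and the span of `{I, C_f, Z}` a `[3×3;3]`-MRD code. -/
def mrdS (F : Type*) [Field F] [Fintype F] :
    Set (Matrix (Fin 3) (Fin 3) F × Matrix (Fin 3) (Fin 3) F × Matrix (Fin 3) (Fin 3) F) :=
  {t | t.1 = 1 ∧
       (∃ a b c : F, Irreducible (cubic F a b c) ∧ t.2.1 = cMat F a b c) ∧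
       t.2.2 0 0 = 0 ∧ t.2.2 1 0 = 0 ∧ t.2.2 2 0 = 1 ∧
       IsMRD F (Submodule.span F {t.1, t.2.1, t.2.2})}

/-- `T_q`: all 3-dimensional subspaces of `F^{3×3}`. -/
def Tset (F : Type*) [Field F] [Fintype F] : Set (Submodule F (Matrix (Fin 3) (Fin 3) F)) :=
  {Cc | Module.finrank F Cc = 3}

/-- `T̂_q`: all `[3×3;3]`-MRD codes. -/
def ThatSet (F : Type*) [Field F] [Fintype F] : Set (Submodule F (Matrix (Fin 3) (Fin 3) F)) :=
  {Cc | IsMRD F Cc}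

/-- `k ↦ k^{q^i}`, the `i`-th Frobenius power (with `q = |F|`), written `k^[i]`. -/
def frk (F : Type*) [Fintype F] (L : Type*) [Field L] (i : ℕ) (k : L) : L :=
  k ^ (Fintype.card F ^ i)

/-- `σ₁(k) = k + k^[1] + k^[2]`. -/
def sig1 (F : Type*) [Fintype F] (L : Type*) [Field L] (k : L) : L :=
  k + frk F L 1 k + frk F L 2 k

/-- `σ₂(k) = k·k^[1] + k·k^[2] + k^[1]·k^[2]`. -/
def sig2 (F : Type*) [Fintype F] (L : Type*) [Field L] (k : L) : L :=
  k * frk F L 1 k + k * frk F L 2 k + frk F L 1 k * frk F L 2 k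

/-- `σ₃(k) = k·k^[1]·k^[2]`. -/
def sig3 (F : Type*) [Fintype F] (L : Type*) [Field L] (k : L) : L :=
  k * frk F L 1 k * frk F L 2 k

/-- `φ(k,k̂) = (k+k̂)(σ₁(k̂)−k̂) − σ₂(k̂)`. -/
def phiM (F : Type*) [Fintype F] (L : Type*) [Field L] (k khat : L) : L :=
  (k + khat) * (sig1 F L khat - khat) - sig2 F L khat

/-- `Σ₁(k,k̂)`, with rows `(0,0,σ₃(k))`, `(1,0,−σ₂(k))`, `(0,1,σ₁(k))`. -/
def Sig1 (F : Type*) [Fintype F] (L : Type*) [Field L] (k khat : L) :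
    Matrix (Fin 3) (Fin 3) L :=
  !![0, 0, sig3 F L k; 1, 0, -(sig2 F L k); 0, 1, sig1 F L k]

/-- `Σ₂(k,k̂)`. -/
def Sig2 (F : Type*) [Fintype F] (L : Type*) [Field L] (k khat : L) :
    Matrix (Fin 3) (Fin 3) L :=
  !![0, sig3 F L khat,
       sig1 F L k * sig3 F L khat + sig1 F L khat * sig3 F L k - sig2 F L (k * khat);
     0, -(sig2 F L khat), -(sig3 F L (k + khat));
     1, sig1 F L khat, sig1 F L k * sig1 F L khat - sig1 F L (k * khat)]

/-!
`Σ₁(k,k̂)` records the `σᵢ(k)` and the second column of `Σ₂(k,k̂)` the `σᵢ(k̂)`, so equal pairs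
force `ℓ = k^[i]` and `ℓ̂ = k^[j]`, both being roots of the cubic with coefficients `σᵢ(k)`.
Applying a Frobenius power to both entries, or swapping two conjugates, leaves `Σ₁, Σ₂` unchanged,
which gives every `i ≠ j`. The diagonal `i = j` would give `Σ₂(k, k^[1]) = Σ₂(k, k)`: then
`k·k^[1]` is a conjugate of `k²`, and the only nontrivial option `k·k^[1] = (k^[2])²` makes
`t = k^[1]/k` a cube root of unity with `t(1+t)²(1+t²) = 8` (from `σ₃(k + k^[1]) = σ₃(2k)`),
which forces `t = 1`, i.e. `k ∈ 𝔽_q`.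
-/

section Conjugates

variable {F : Type*} [Fintype F] {L : Type*} [Field L]

def sigs (F : Type*) [Fintype F] (L : Type*) [Field L] (x : L) : L × L × L :=
  (sig1 F L x, sig2 F L x, sig3 F L x)

@[simp]
theorem frk_zero (x : L) : frk F L 0 x = x := by simp [frk]

/-- `y` is a root of `(Y - x)(Y - x^[1])(Y - x^[2])`, whose coefficients are the `σᵢ(x) = σᵢ(y)`. -/
theorem exists_eq_frk_of_sigs_eq {x y : L} (h : sigs F L x = sigs F L y) :
    ∃ i : Fin 3, y = frk F L i x := by
  simp only [sigs, Prod.mk.injEq] at h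
  obtain ⟨h1, h2, h3⟩ := h
  have hroot : (y - x) * (y - frk F L 1 x) * (y - frk F L 2 x) = 0 := by
    have e : ∀ z : L, (y - z) * (y - frk F L 1 z) * (y - frk F L 2 z)
        = y ^ 3 - sig1 F L z * y ^ 2 + sig2 F L z * y - sig3 F L z := by
      intro z; simp only [sig1, sig2, sig3]; ring
    rw [e, h1, h2, h3, ← e, sub_self, zero_mul, zero_mul]
  simp only [mul_eq_zero, sub_eq_zero] at hroot
  rcases hroot with (h | h) | h
  exacts [⟨0, by simpa using h⟩, ⟨1, h⟩, ⟨2, h⟩]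

theorem sigs_eq_of_Sig1_eq {x y x' y' : L} (h : Sig1 F L x y = Sig1 F L x' y') :
    sigs F L x = sigs F L x' := by
  have h1 := congr_fun₂ h 2 2
  have h2 := congr_fun₂ h 1 2
  have h3 := congr_fun₂ h 0 2
  simp_all [Sig1, sigs]

theorem sigs_eq_of_Sig2_eq {x y x' y' : L} (h : Sig2 F L x y = Sig2 F L x' y') :
    sigs F L y = sigs F L y' := by
  have h1 := congr_fun₂ h 2 1
  have h2 := congr_fun₂ h 1 1
  have h3 := congr_fun₂ h 0 1
  simp_all [Sig2, sigs]

theorem Sig1_eq_of_sigs_eq {x y x' y' : L} (h : sigs F L x = sigs F L x') :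
    Sig1 F L x y = Sig1 F L x' y' := by
  simp only [sigs, Prod.mk.injEq] at h
  simp only [Sig1, h]

theorem Sig2_comm {x y : L} (h : sigs F L x = sigs F L y) : Sig2 F L x y = Sig2 F L y x := by
  simp only [sigs, Prod.mk.injEq] at h
  simp only [Sig2, h, mul_comm x y, add_comm x y]

end Conjugates

section Frobenius

variable {F : Type*} [Field F] [Fintype F] {L : Type*} [Field L] [Algebra F L]

theorem frk_eq_frobeniusAlgHom_pow_apply (i : ℕ) (x : L) :
    frk F L i x = (FiniteField.frobeniusAlgHom F L ^ i) x := by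
  rw [AlgHom.coe_pow, FiniteField.coe_frobeniusAlgHom, pow_iterate, frk]

theorem frk_frk (i j : ℕ) (x : L) : frk F L i (frk F L j x) = frk F L (i + j) x := by
  simp only [frk_eq_frobeniusAlgHom_pow_apply, pow_add, AlgHom.mul_apply]

theorem frk_mul (i : ℕ) (x y : L) : frk F L i (x * y) = frk F L i x * frk F L i y := by
  simp only [frk_eq_frobeniusAlgHom_pow_apply, map_mul]

theorem frk_add (i : ℕ) (x y : L) : frk F L i (x + y) = frk F L i x + frk F L i y := by
  simp only [frk_eq_frobeniusAlgHom_pow_apply, map_add]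

theorem sig3_mul (x y : L) : sig3 F L (x * y) = sig3 F L x * sig3 F L y := by
  simp only [sig3, frk_mul]; ring

theorem frk_mod_finrank [Finite L] (i : ℕ) (x : L) :
    frk F L (i % Module.finrank F L) x = frk F L i x := by
  have h := FiniteField.orderOf_frobeniusAlgHom F L ▸ pow_orderOf_eq_one _
  simp only [frk_eq_frobeniusAlgHom_pow_apply, ← pow_eq_pow_mod i h]

/-- The Frobenius `x ↦ x ^ q` generates `Gal(L/F)`, so its fixed points are the fixed field `F`. -/
theorem mem_range_algebraMap_of_frk_one_eq [Finite L] {x : L} (h : frk F L 1 x = x) :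
    x ∈ Set.range (algebraMap F L) := by
  rw [IsGalois.mem_range_algebraMap_iff_fixed]
  intro f
  obtain ⟨n, rfl⟩ := (FiniteField.bijective_frobeniusAlgEquivOfAlgebraic_pow F L).2 f
  rw [frk, pow_one] at h
  simp only [AlgEquiv.coe_pow, FiniteField.coe_frobeniusAlgEquivOfAlgebraic]
  exact Function.iterate_fixed h n

end Frobenius

theorem eq_one_of_pow_three_eq_one {K : Type*} [Field K] {t : K} (ht : t ^ 3 = 1)
    (h : t * (1 + t) ^ 2 * (1 + t ^ 2) = 8) : t = 1 := by
  have hfac : (t - 1) * (t ^ 2 + t + 1) = 0 := by linear_combination ht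
  rcases mul_eq_zero.1 hfac with h1 | h1
  · exact sub_eq_zero.1 h1
  -- `t` is a primitive cube root of unity, so the left side of `h` is `-t³ = -1`: thus `9 = 0`,
  -- the characteristic is `3`, and `t² + t + 1 = (t - 1)²`.
  have h3 : (3 : K) * 3 = 0 := by
    linear_combination (t ^ 3 + t ^ 2 - 8 * t + 9) * h1 - h + 8 * ht
  have h3 : (3 : K) = 0 := by simpa using h3
  have hsq : (t - 1) ^ 2 = 0 := by linear_combination h1 - (t : K) * h3
  exact sub_eq_zero.1 (pow_eq_zero_iff two_ne_zero |>.1 hsq)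

theorem eq_of_mul_eq_sq_of_prod_add_eq {K : Type*} [Field K] {a b c : K} (ha : a ≠ 0)
    (hab : a * b = c ^ 2) (hbc : b * c = a ^ 2)
    (h : (a + b) * (b + c) * (c + a) = 8 * a * b * c) : a = b := by
  have hc : c ≠ 0 := by
    rintro rfl
    exact ha (pow_eq_zero_iff two_ne_zero |>.1 (by simpa using hbc.symm))
  have hca : c * a = b ^ 2 := by
    refine mul_left_cancel₀ (mul_ne_zero hc ha) ?_
    linear_combination -(b * c) * hab - c ^ 2 * hbc
  set t := b / a
  have hb : b = t * a := (div_mul_cancel₀ b ha).symm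
  have hc' : c = t ^ 2 * a := mul_right_cancel₀ ha (by rw [hca, hb]; ring)
  rw [hb, hc'] at hbc h
  have ht : t ^ 3 = 1 := mul_left_cancel₀ (pow_ne_zero 2 ha) (by linear_combination hbc)
  have h' : t * (1 + t) ^ 2 * (1 + t ^ 2) = 8 :=
    mul_left_cancel₀ (pow_ne_zero 3 ha) (by linear_combination h + 8 * a ^ 3 * ht)
  rw [hb, eq_one_of_pow_three_eq_one ht h', one_mul]

section CubicExtension

variable {F : Type*} [Field F] [Fintype F] {L : Type*} [Field L] [Algebra F L] [Finite L]
  (hL : Module.finrank F L = 3)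
include hL

theorem frk_mod_three (i : ℕ) (x : L) : frk F L (i % 3) x = frk F L i x :=
  hL ▸ frk_mod_finrank i x

theorem frk_three (x : L) : frk F L 3 x = x := by
  rw [← frk_mod_three hL, Nat.mod_self, frk_zero]

theorem sigs_frk (i : ℕ) (x : L) : sigs F L (frk F L i x) = sigs F L x := by
  induction i with
  | zero => rw [frk_zero]
  | succ i ih =>
    rw [← ih, add_comm, ← frk_frk]
    generalize frk F L i x = y
    simp only [sigs, sig1, sig2, sig3, frk_frk, Nat.reduceAdd, frk_three hL, Prod.mk.injEq]
    exact ⟨by ring, by ring, by ring⟩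

theorem Sig1_frk (i : ℕ) (x y : L) : Sig1 F L (frk F L i x) (frk F L i y) = Sig1 F L x y :=
  Sig1_eq_of_sigs_eq (sigs_frk hL i x)

theorem Sig2_frk (i : ℕ) (x y : L) : Sig2 F L (frk F L i x) (frk F L i y) = Sig2 F L x y := by
  have h := fun z => sigs_frk hL i z
  simp only [sigs, Prod.mk.injEq] at h
  simp only [Sig2, ← frk_mul, ← frk_add, h]

theorem Sig2_frk_two (x : L) : Sig2 F L x (frk F L 2 x) = Sig2 F L x (frk F L 1 x) := by
  rw [Sig2_comm (sigs_frk hL 2 x).symm, ← Sig2_frk hL 2 x (frk F L 1 x), frk_frk, frk_three hL]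

theorem frk_one_eq_of_Sig2_eq {k : L} (h : Sig2 F L k (frk F L 1 k) = Sig2 F L k k) :
    frk F L 1 k = k := by
  rcases eq_or_ne k 0 with rfl | hk0
  · rw [frk, zero_pow (by positivity)]
  have hsig := sigs_frk hL 1 k
  simp only [sigs, Prod.mk.injEq] at hsig
  obtain ⟨hs1, -, hs3⟩ := hsig
  have h22 := congr_fun₂ h 2 2
  have h12 := congr_fun₂ h 1 2
  have h02 := congr_fun₂ h 0 2
  simp only [Sig2, hs1, hs3, of_apply, cons_val', cons_val, cons_val_zero, cons_val_one,
    empty_val', cons_val_fin_one, neg_inj, sub_right_inj] at h22 h12 h02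
  have hprod : sigs F L (k * k) = sigs F L (k * frk F L 1 k) := by
    simp only [sigs, sig3_mul, hs3, h22, h02]
  obtain ⟨i, hi⟩ := exists_eq_frk_of_sigs_eq hprod
  set b := frk F L 1 k with hb
  set c := frk F L 2 k with hc
  have hfb : frk F L 1 b = c := by rw [hb, frk_frk]
  have hfc : frk F L 1 c = k := by rw [hc, frk_frk, frk_three hL]
  have hf2b : frk F L 2 b = k := by rw [hb, frk_frk, frk_three hL]
  fin_cases i <;> simp only [frk_zero, frk_mul, ← hb, ← hc] at hi
  · exact mul_left_cancel₀ hk0 hi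
  · exact (mul_right_cancel₀ (pow_ne_zero _ hk0) hi).symm
  · have hbc : b * c = k ^ 2 := by simpa [frk_mul, hfb, hfc, sq] using congr_arg (frk F L 1) hi
    have h3 : (k + b) * (b + c) * (c + k) = 8 * k * b * c := by
      simp only [sig3, frk_add, hfb, hf2b, ← hb, ← hc] at h12
      linear_combination h12
    exact (eq_of_mul_eq_sq_of_prod_add_eq hk0 (by rw [hi, sq]) hbc h3).symm

end CubicExtension

theorem exists_fin_three_of_ne {n : ℕ} (hn : n = 1 ∨ n = 2) {i j : Fin 3} (hij : i ≠ j) :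
    ∃ r : Fin 3, (i = r ∧ (j : ℕ) = (n + r) % 3) ∨ ((i : ℕ) = (n + r) % 3 ∧ j = r) := by
  rcases hn with rfl | rfl <;> revert i j <;> decide

theorem Sigma_injectivity_conjugate_general (F : Type*) [Field F] [Fintype F]
    (L : Type*) [Field L] [Algebra F L] (hL : Module.finrank F L = 3)
    (k khat l lhat : L)
    (hk : k ∉ Set.range (algebraMap F L))
    (n : ℕ) (hn : n = 1 ∨ n = 2) (hkh : khat = frk F L n k) :
    (Sig1 F L k khat = Sig1 F L l lhat ∧ Sig2 F L k khat = Sig2 F L l lhat) ↔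
      ∃ r : Fin 3, (l = frk F L (r : ℕ) k ∧ lhat = frk F L ((n + (r : ℕ)) % 3) k) ∨
        (l = frk F L ((n + (r : ℕ)) % 3) k ∧ lhat = frk F L (r : ℕ) k) := by
  have : Module.Finite F L := Module.finite_of_finrank_pos (by omega)
  have : Finite L := Module.finite_of_finite F
  subst hkh
  have hfrk (r : ℕ) : frk F L ((n + r) % 3) k = frk F L r (frk F L n k) := by
    rw [frk_mod_three hL, frk_frk, add_comm]
  constructor
  · rintro ⟨h1, h2⟩
    obtain ⟨i, rfl⟩ := exists_eq_frk_of_sigs_eq (sigs_eq_of_Sig1_eq h1)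
    obtain ⟨j, rfl⟩ :=
      exists_eq_frk_of_sigs_eq ((sigs_frk hL n k).symm.trans (sigs_eq_of_Sig2_eq h2))
    rcases eq_or_ne i j with rfl | hij
    · have h : Sig2 F L k (frk F L n k) = Sig2 F L k k := h2.trans (Sig2_frk hL i k k)
      have h' : Sig2 F L k (frk F L 1 k) = Sig2 F L k k := by
        rcases hn with rfl | rfl
        exacts [h, Sig2_frk_two hL k ▸ h]
      exact absurd (mem_range_algebraMap_of_frk_one_eq (frk_one_eq_of_Sig2_eq hL h')) hk
    · obtain ⟨r, ⟨hi, hj⟩ | ⟨hi, hj⟩⟩ := exists_fin_three_of_ne hn hij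
      exacts [⟨r, .inl ⟨by rw [hi], by rw [hj]⟩⟩, ⟨r, .inr ⟨by rw [hi], by rw [hj]⟩⟩]
  · rintro ⟨r, ⟨rfl, rfl⟩ | ⟨rfl, rfl⟩⟩ <;> rw [hfrk]
    · exact ⟨(Sig1_frk hL r k _).symm, (Sig2_frk hL r k _).symm⟩
    · refine ⟨Sig1_eq_of_sigs_eq (by simp only [sigs_frk hL]), ?_⟩
      rw [Sig2_comm (by simp only [sigs_frk hL]), Sig2_frk hL]

/-- for `k, k̂, ℓ, ℓ̂ ∈ L \ F` with `k̂ = k^[n]`, `n ∈ {1,2}`, the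
matrix pairs `(Σ₁, Σ₂)` coincide iff `(ℓ, ℓ̂) = (k^[r], k^[n+r])` or
`(ℓ, ℓ̂) = (k^[n+r], k^[r])` for some `r ∈ {0,1,2}` (exponents mod 3). -/
theorem Sigma_injectivity_conjugate (F : Type*) [Field F] [Fintype F]
    (L : Type*) [Field L] [Algebra F L] (hL : Module.finrank F L = 3)
    (k khat l lhat : L)
    (hk : k ∉ Set.range (algebraMap F L)) (hkhat : khat ∉ Set.range (algebraMap F L))
    (hl : l ∉ Set.range (algebraMap F L)) (hlhat : lhat ∉ Set.range (algebraMap F L))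
    (n : ℕ) (hn : n = 1 ∨ n = 2) (hkh : khat = frk F L n k) :
    (Sig1 F L k khat = Sig1 F L l lhat ∧ Sig2 F L k khat = Sig2 F L l lhat) ↔
      ∃ r : Fin 3, (l = frk F L (r : ℕ) k ∧ lhat = frk F L ((n + (r : ℕ)) % 3) k) ∨
        (l = frk F L ((n + (r : ℕ)) % 3) k ∧ lhat = frk F L (r : ℕ) k) :=
  Sigma_injectivity_conjugate_general F L hL k khat l lhat hk n hn hkh
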